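/- Let f and g be polynomials in disjoint sets of variables x = (x₁,…,x_k) and y = (y₁,…,y_l). If b_f(s) is the classical Bernstein–Sato polynomial of f (in the x-variables), then for every α ≥ 0 the meromorphic Bernstein–Sato polynomial b^α_{f/g}(s) divides b_f(s). -/

import Mathlib

noncomputable section

namespace MeroBS

set_option linter.unusedSectionVars false

variable {k A B : Type*} [CommRing k] [CommRing A] [CommRing B]
  [Algebra k A] [Algebra A B] [Algebra k B] [IsScalarTower k A B]
  (S : Submonoid A) [IsLocalization S B]

def toDual (d : Derivation k A A) : A →+* DualNumber B where
  toFun a := ⟨algebraMap A B a, algebraMap A B (d a)⟩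
  map_one' := by ext <;> simp
  map_mul' a b := by
    ext
    · show algebraMap A B (a * b) = algebraMap A B a * algebraMap A B b
      simp
    · show algebraMap A B (d (a * b)) = algebraMap A B a • algebraMap A B (d b)
        + MulOpposite.op (algebraMap A B b) • algebraMap A B (d a)
      simp [d.leibniz, MulOpposite.smul_eq_mul_unop]
      ring
  map_zero' := by ext <;> simp
  map_add' a b := by
    ext
    · show algebraMap A B (a + b) = algebraMap A B a + algebraMap A B b
      simp
    · show algebraMap A B (d (a + b)) = algebraMap A B (d a) + algebraMap A B (d b)
      simp

theorem toDual_isUnit (d : Derivation k A A) (s : S) : IsUnit (toDual (B := B) d s) := by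
  rw [TrivSqZeroExt.isUnit_iff_isUnit_fst]
  exact IsLocalization.map_units B s

def dualLift (d : Derivation k A A) : B →+* DualNumber B :=
  IsLocalization.lift (M := S) (g := toDual (B := B) d) (fun s => toDual_isUnit S d s)

theorem dualLift_algebraMap (d : Derivation k A A) (a : A) :
    dualLift S d (algebraMap A B a) = toDual (B := B) d a :=
  IsLocalization.lift_eq _ _

theorem dualLift_fst (d : Derivation k A A) (b : B) :
    (dualLift S d b).fst = b := by
  have h : (TrivSqZeroExt.fstHom B B B).toRingHom.comp (dualLift S d) = RingHom.id B := by
    apply IsLocalization.ringHom_ext S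
    ext a
    simp [dualLift_algebraMap, toDual]
    rfl
  exact congrArg (fun f => f b) (congrArg (fun f => f.toFun) h)

/-- Extension of a derivation to a localization. -/
def Derivation.extendLoc (d : Derivation k A A) : Derivation k B B where
  toLinearMap :=
    { toFun := fun b => (dualLift S d b).snd
      map_add' := fun x y => by simp
      map_smul' := fun c b => by
        show (dualLift S d (c • b)).snd = c • (dualLift S d b).snd
        have h1 : (c • b) = algebraMap k B c * b := Algebra.smul_def c b
        have hc : dualLift S d (algebraMap k B c) = ⟨algebraMap k B c, 0⟩ := by
          rw [IsScalarTower.algebraMap_apply k A B, dualLift_algebraMap]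
          ext
          · simp [toDual]
            rfl
          · show algebraMap A B (d (algebraMap k A c)) = 0
            simp
        rw [h1, map_mul, TrivSqZeroExt.snd_mul, hc]
        simp [Algebra.smul_def] }
  map_one_eq_zero' := by simp
  leibniz' a b := by
    show (dualLift S d (a * b)).snd = _
    rw [map_mul, TrivSqZeroExt.snd_mul, dualLift_fst, dualLift_fst]
    simp [smul_eq_mul, mul_comm]

theorem extendLoc_algebraMap (d : Derivation k A A) (a : A) :
    Derivation.extendLoc S d (algebraMap A B a) = algebraMap A B (d a) := by
  show (dualLift S d (algebraMap A B a)).snd = _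
  rw [dualLift_algebraMap]
  rfl

/-- Coefficientwise extension of a derivation to the polynomial ring. -/
def Derivation.polyExt (d : Derivation k A A) : Derivation k (Polynomial A) (Polynomial A) :=
  PolynomialModule.equivPolynomialSelf.compDer d.mapCoeffs

end MeroBS

noncomputable section Framework

namespace MeroBS

variable {𝕂 R : Type*} [Field 𝕂] [CommRing R] [Algebra 𝕂 R]

/-- The underlying module of `𝓜^α_{f/g}[s]`: the localization `R[s]_{fg}`. -/
abbrev Md (f g : R) : Type _ := Localization.Away (Polynomial.C (f * g))

variable (f g : R)

/-- The image of an element of `R` in `R[s]_{fg}`. -/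
def elt (r : R) : Md f g := algebraMap (Polynomial R) (Md f g) (Polynomial.C r)

/-- The element `s`. -/
def sElt : Md f g := algebraMap (Polynomial R) (Md f g) Polynomial.X

/-- The inverse of `fg`. -/
def fgInv : Md f g := IsLocalization.Away.invSelf (S := Md f g) (Polynomial.C (f * g))

/-- The inverse of `f`. -/
def fInv : Md f g := elt f g g * fgInv f g

/-- The inverse of `g`. -/
def gInv : Md f g := elt f g f * fgInv f g

/-- Extension of a derivation of `R` to `R[s]_{fg}`, with `d s = 0`. -/
def extD (d : Derivation 𝕂 R R) : Derivation 𝕂 (Md f g) (Md f g) :=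
  Derivation.extendLoc (Submonoid.powers (Polynomial.C (f * g))) (Derivation.polyExt d)

/-- Multiplication operator. -/
def mulOp (c : Md f g) : Module.End 𝕂 (Md f g) := LinearMap.mulLeft 𝕂 c

variable (α : 𝕂)

/-- The twisted action of a derivation `∂` on `𝓜^α_{f/g}[s]`, encoding
`∂·(h (f^s/g^{s+α})) = (∂h + s h ∂f/f - (s+α) h ∂g/g)·(f^s/g^{s+α})`. -/
def twist (d : Derivation 𝕂 R R) : Module.End 𝕂 (Md f g) :=
  (extD f g d).toLinearMap +
    mulOp f g (sElt f g * elt f g (d f) * fInv f g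
      - (sElt f g + algebraMap 𝕂 (Md f g) α) * elt f g (d g) * gInv f g)

/-- The ring of differential operators `D_{R|𝕂}[s]` acting on `𝓜^α_{f/g}[s]`:
generated by multiplications by elements of `R`, multiplication by `s`, and the
twisted derivations. -/
def Dops : Subalgebra 𝕂 (Module.End 𝕂 (Md f g)) :=
  Algebra.adjoin 𝕂
    ((Set.range fun r : R => mulOp f g (elt f g r)) ∪ {mulOp f g (sElt f g)} ∪
      Set.range (twist f g α))

/-- The functional equation `δ(s)·c·(f^s/g^{s+α}) = b(s)·(f^s/g^{s+α})` for the
module element `c·(f^s/g^{s+α})`. -/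
def FunEqAt (c : Md f g) (b : Polynomial 𝕂) : Prop :=
  ∃ δ ∈ Dops f g α, δ c = Polynomial.aeval (sElt f g) b

/-- The Bernstein–Sato functional equation `δ(s)·f·(f^s/g^{s+α}) = b(s)·(f^s/g^{s+α})`. -/
def FunEq (b : Polynomial 𝕂) : Prop := FunEqAt f g α (elt f g f) b

/-- `b` is the Bernstein–Sato polynomial of order `α` of `f/g`: the monic polynomial of
smallest degree satisfying the functional equation. -/
def IsBernsteinSato (b : Polynomial 𝕂) : Prop :=
  b.Monic ∧ FunEq f g α b ∧
    ∀ b' : Polynomial 𝕂, b' ≠ 0 → FunEq f g α b' → b.degree ≤ b'.degree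

end MeroBS

end Framework

noncomputable section Aux
namespace MeroBS
open Polynomial
variable {𝕂 R : Type*} [Field 𝕂] [CommRing R] [Algebra 𝕂 R] (f g : R) (α : 𝕂)

theorem funEqAt_sub {c : Md f g} {b1 b2 : Polynomial 𝕂}
    (h1 : FunEqAt f g α c b1) (h2 : FunEqAt f g α c b2) : FunEqAt f g α c (b1 - b2) := by
  obtain ⟨δ1, hδ1, he1⟩ := h1
  obtain ⟨δ2, hδ2, he2⟩ := h2
  exact ⟨δ1 - δ2, sub_mem hδ1 hδ2, by simp [LinearMap.sub_apply, he1, he2]⟩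

theorem funEqAt_mul (q : Polynomial 𝕂) {c : Md f g} {b : Polynomial 𝕂}
    (h : FunEqAt f g α c b) : FunEqAt f g α c (q * b) := by
  obtain ⟨δ, hδ, he⟩ := h
  have h1 : mulOp f g (sElt f g) ∈ Dops f g α :=
    Algebra.subset_adjoin (Set.mem_union_left _ (Set.mem_union_right _ rfl))
  have h2 : mulOp f g (aeval (sElt f g) q) = aeval (A := Module.End 𝕂 (Md f g)) (mulOp f g (sElt f g)) q := by
    exact (Polynomial.aeval_algHom_apply (F := (Md f g →ₐ[𝕂] Module.End 𝕂 (Md f g)))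
      (Algebra.lmul 𝕂 (Md f g)) (sElt f g) q).symm
  have hmem : mulOp f g (aeval (sElt f g) q) ∈ Dops f g α := by
    rw [h2]
    have : aeval (A := Module.End 𝕂 (Md f g)) (mulOp f g (sElt f g)) q ∈ Algebra.adjoin 𝕂 {mulOp f g (sElt f g)} := by
      rw [Algebra.adjoin_singleton_eq_range_aeval]; exact ⟨q, rfl⟩
    exact Algebra.adjoin_le (Set.singleton_subset_iff.mpr h1) this
  refine ⟨mulOp f g (aeval (sElt f g) q) * δ, mul_mem hmem hδ, ?_⟩
  rw [Module.End.mul_apply, he]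
  simp only [mulOp, LinearMap.mulLeft_apply, ← map_mul]

theorem IsBernsteinSato.dvd {b b' : Polynomial 𝕂}
    (hb : IsBernsteinSato f g α b) (h' : FunEq f g α b') : b ∣ b' := by
  rw [← Polynomial.modByMonic_eq_zero_iff_dvd hb.1]
  by_contra hr
  have hq : FunEq f g α ((b' /ₘ b) * b) := funEqAt_mul f g α _ hb.2.1
  have hrfe : FunEq f g α (b' %ₘ b) := by
    have h3 : b' %ₘ b = b' - (b' /ₘ b) * b := by
      rw [mul_comm, eq_sub_iff_add_eq]; exact Polynomial.modByMonic_add_div b' b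
    rw [h3]; exact funEqAt_sub f g α h' hq
  exact absurd (lt_of_le_of_lt (hb.2.2 _ hr hrfe) (Polynomial.degree_modByMonic_lt b' hb.1))
    (lt_irrefl _)

end MeroBS

noncomputable section Sep
namespace MeroBS
open Polynomial MvPolynomial

variable (k l : ℕ)

/-- Extension of a derivation in the `x`-variables to the full polynomial ring,
killing the `y`-variables. -/
def extDer (d : Derivation ℂ (MvPolynomial (Fin k) ℂ) (MvPolynomial (Fin k) ℂ)) :
    Derivation ℂ (MvPolynomial (Fin k ⊕ Fin l) ℂ) (MvPolynomial (Fin k ⊕ Fin l) ℂ) :=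
  mkDerivation ℂ (Sum.elim (fun i => rename Sum.inl (d (X i))) fun _ => (0 : _))

theorem extDer_rename (d : Derivation ℂ (MvPolynomial (Fin k) ℂ) (MvPolynomial (Fin k) ℂ))
    (p : MvPolynomial (Fin k) ℂ) :
    extDer k l d (rename Sum.inl p) = rename Sum.inl (d p) := by
  induction p using MvPolynomial.induction_on with
  | C c => simp [extDer, MvPolynomial.derivation_C]
  | add p q hp hq => simp [hp, hq]
  | mul_X p i hp =>
    rw [map_mul, rename_X, Derivation.leibniz, Derivation.leibniz]
    simp only [smul_eq_mul, map_add, map_mul, rename_X, hp]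
    rw [show (extDer k l d) (X (Sum.inl i)) = rename Sum.inl (d (X i)) from
      mkDerivation_X _ _ _]

theorem extDer_rename_inr (d : Derivation ℂ (MvPolynomial (Fin k) ℂ) (MvPolynomial (Fin k) ℂ))
    (p : MvPolynomial (Fin l) ℂ) :
    extDer k l d (rename Sum.inr p) = 0 := by
  induction p using MvPolynomial.induction_on with
  | C c => simp [extDer, MvPolynomial.derivation_C]
  | add p q hp hq => simp [hp, hq]
  | mul_X p i hp =>
    rw [map_mul, rename_X, Derivation.leibniz]
    rw [show (extDer k l d) (X (Sum.inr i)) = 0 from mkDerivation_X _ _ _]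
    simp [hp]

variable (f₀ : MvPolynomial (Fin k) ℂ) (g₀ : MvPolynomial (Fin l) ℂ)

local notation "F" => (MvPolynomial.rename (Sum.inl : Fin k → Fin k ⊕ Fin l) f₀)
local notation "G" => (MvPolynomial.rename (Sum.inr : Fin l → Fin k ⊕ Fin l) g₀)

/-- Coefficientwise renaming of variables, on `R[s]`. -/
def ψ : Polynomial (MvPolynomial (Fin k) ℂ) →ₐ[ℂ] Polynomial (MvPolynomial (Fin k ⊕ Fin l) ℂ) :=
  Polynomial.mapAlgHom (rename Sum.inl)

theorem ψ_C_base : (ψ k l) (Polynomial.C (f₀ * 1)) = Polynomial.C F := by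
  simp [ψ]

theorem unit_CF : IsUnit (algebraMap (Polynomial (MvPolynomial (Fin k ⊕ Fin l) ℂ)) (Md F G)
    (Polynomial.C F)) := by
  apply IsLocalization.Away.isUnit_of_dvd (x := Polynomial.C (F * G))
  rw [map_mul]
  exact dvd_mul_right _ _

/-- The map `R₀[s]_{f₀} → R[s]_{fg}` induced by renaming. -/
def φRing : Md f₀ (1 : MvPolynomial (Fin k) ℂ) →+* Md F G :=
  IsLocalization.Away.lift (Polynomial.C (f₀ * 1))
    (g := (algebraMap (Polynomial (MvPolynomial (Fin k ⊕ Fin l) ℂ)) (Md F G)).comp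
      (ψ k l).toRingHom)
    (by rw [RingHom.comp_apply]
        show IsUnit (algebraMap _ (Md F G) ((ψ k l) (Polynomial.C (f₀ * 1))))
        rw [ψ_C_base]
        exact unit_CF k l f₀ g₀)

theorem φRing_alg (p : Polynomial (MvPolynomial (Fin k) ℂ)) :
    φRing k l f₀ g₀ (algebraMap _ (Md f₀ (1 : MvPolynomial (Fin k) ℂ)) p) =
      algebraMap _ (Md F G) ((ψ k l) p) :=
  IsLocalization.Away.lift_eq _ _ _

/-- `φ` as a `ℂ`-algebra homomorphism. -/
def φ : Md f₀ (1 : MvPolynomial (Fin k) ℂ) →ₐ[ℂ] Md F G where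
  toRingHom := φRing k l f₀ g₀
  commutes' := fun r => by
    show φRing k l f₀ g₀ (algebraMap ℂ _ r) = algebraMap ℂ _ r
    rw [IsScalarTower.algebraMap_apply ℂ (Polynomial (MvPolynomial (Fin k) ℂ))
      (Md f₀ (1 : MvPolynomial (Fin k) ℂ)), φRing_alg, AlgHom.commutes,
      ← IsScalarTower.algebraMap_apply]

theorem φ_alg (p : Polynomial (MvPolynomial (Fin k) ℂ)) :
    φ k l f₀ g₀ (algebraMap _ (Md f₀ (1 : MvPolynomial (Fin k) ℂ)) p) =
      algebraMap _ (Md F G) ((ψ k l) p) :=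
  φRing_alg k l f₀ g₀ p

theorem φ_elt (r : MvPolynomial (Fin k) ℂ) :
    φ k l f₀ g₀ (elt f₀ 1 r) = elt F G (rename Sum.inl r) := by
  rw [elt, φ_alg]
  simp [ψ, elt]

theorem φ_s : φ k l f₀ g₀ (sElt f₀ 1) = sElt F G := by
  rw [sElt, φ_alg]
  simp [ψ, sElt]

theorem φ_fgInv : φ k l f₀ g₀ (fgInv f₀ 1) = elt F G G * fgInv F G := by
  have h0 : algebraMap _ (Md f₀ (1 : MvPolynomial (Fin k) ℂ)) (Polynomial.C (f₀ * 1)) *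
      fgInv f₀ 1 = 1 := IsLocalization.Away.mul_invSelf _
  have h1 : algebraMap _ (Md F G) (Polynomial.C F) * φ k l f₀ g₀ (fgInv f₀ 1) = 1 := by
    have := congrArg (φ k l f₀ g₀) h0
    rwa [map_mul, map_one, φ_alg, ψ_C_base] at this
  have h2 : algebraMap _ (Md F G) (Polynomial.C F) * (elt F G G * fgInv F G) = 1 := by
    rw [fgInv, elt, ← mul_assoc, ← map_mul, ← Polynomial.C_mul]
    exact IsLocalization.Away.mul_invSelf _
  calc φ k l f₀ g₀ (fgInv f₀ 1)
      = φ k l f₀ g₀ (fgInv f₀ 1) * (algebraMap _ (Md F G) (Polynomial.C F) *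
        (elt F G G * fgInv F G)) := by rw [h2]; exact (mul_one _).symm
    _ = (algebraMap _ (Md F G) (Polynomial.C F) * φ k l f₀ g₀ (fgInv f₀ 1)) *
        (elt F G G * fgInv F G) := by ring
    _ = elt F G G * fgInv F G := by rw [h1, one_mul]


theorem ψ_polyExt (d : Derivation ℂ (MvPolynomial (Fin k) ℂ) (MvPolynomial (Fin k) ℂ))
    (p : Polynomial (MvPolynomial (Fin k) ℂ)) :
    (ψ k l) (Derivation.polyExt d p) = Derivation.polyExt (extDer k l d) ((ψ k l) p) := by
  ext i
  rw [show ((ψ k l) (Derivation.polyExt d p)).coeff i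
      = rename Sum.inl ((Derivation.polyExt d p).coeff i) from Polynomial.coeff_map _ _]
  rw [show (Derivation.polyExt (extDer k l d) ((ψ k l) p)).coeff i
      = extDer k l d (((ψ k l) p).coeff i) from rfl]
  rw [show ((ψ k l) p).coeff i = rename Sum.inl (p.coeff i) from Polynomial.coeff_map _ _]
  rw [show (Derivation.polyExt d p).coeff i = d (p.coeff i) from rfl]
  rw [extDer_rename]

theorem extD_algebraMap' {R : Type*} [CommRing R] [Algebra ℂ R] (f g : R)
    (d : Derivation ℂ R R) (p : Polynomial R) :
    extD f g d (algebraMap (Polynomial R) (Md f g) p)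
      = algebraMap (Polynomial R) (Md f g) (Derivation.polyExt d p) :=
  extendLoc_algebraMap _ _ _

/-- Two derivations intertwined by a ring hom out of a localization agree everywhere
once they agree on the image of the base ring. -/
theorem derivation_comm_of_localization {𝕜 R A B : Type*} [CommRing 𝕜] [CommRing R]
    [CommRing A] [CommRing B] [Algebra 𝕜 A] [Algebra 𝕜 B] [Algebra R A]
    (M : Submonoid R) [IsLocalization M A]
    (φ : A →+* B) (D1 : Derivation 𝕜 A A) (D2 : Derivation 𝕜 B B)
    (hbase : ∀ r : R, D2 (φ (algebraMap R A r)) = φ (D1 (algebraMap R A r)))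
    (x : A) : D2 (φ x) = φ (D1 x) := by
  obtain ⟨⟨p, s⟩, hx⟩ := IsLocalization.surj M x
  have hu : IsUnit (φ (algebraMap R A (s : R))) :=
    (IsLocalization.map_units A s).map φ
  refine hu.mul_left_cancel ?_
  have e2 : φ x * D2 (φ (algebraMap R A (s : R))) + φ (algebraMap R A (s : R)) * D2 (φ x)
      = D2 (φ (algebraMap R A p)) := by
    rw [← hx, map_mul, Derivation.leibniz, smul_eq_mul, smul_eq_mul]
  have e3 : φ x * φ (D1 (algebraMap R A (s : R))) + φ (algebraMap R A (s : R)) * φ (D1 x)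
      = φ (D1 (algebraMap R A p)) := by
    rw [← hx, Derivation.leibniz, smul_eq_mul, smul_eq_mul, map_add, map_mul, map_mul]
  linear_combination e2 - e3 - φ x * hbase (s : R) + hbase p

theorem extD_comm (d : Derivation ℂ (MvPolynomial (Fin k) ℂ) (MvPolynomial (Fin k) ℂ))
    (x : Md f₀ (1 : MvPolynomial (Fin k) ℂ)) :
    extD F G (extDer k l d) (φ k l f₀ g₀ x) = φ k l f₀ g₀ (extD f₀ 1 d x) := by
  refine derivation_comm_of_localization
    (Submonoid.powers (Polynomial.C (f₀ * 1))) (φ k l f₀ g₀ : Md f₀ (1 : MvPolynomial (Fin k) ℂ) →+* Md F G)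
    (extD f₀ 1 d) (extD F G (extDer k l d)) (fun p => ?_) x
  show extD F G (extDer k l d) (φ k l f₀ g₀ (algebraMap _ _ p)) =
    φ k l f₀ g₀ (extD f₀ 1 d (algebraMap _ _ p))
  rw [φ_alg, extD_algebraMap', extD_algebraMap', φ_alg, ψ_polyExt]

set_option maxHeartbeats 1000000 in
theorem dops_lift (α : ℂ) {δ₀ : Module.End ℂ (Md f₀ (1 : MvPolynomial (Fin k) ℂ))}
    (h : δ₀ ∈ Dops f₀ (1 : MvPolynomial (Fin k) ℂ) (0 : ℂ)) :
    ∃ δ ∈ Dops F G α, ∀ x, δ (φ k l f₀ g₀ x) = φ k l f₀ g₀ (δ₀ x) := by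
  induction h using Algebra.adjoin_induction with
  | mem δ₀ hδ₀ =>
    rcases hδ₀ with (hδ | hδ) | hδ
    · obtain ⟨r, rfl⟩ := hδ
      refine ⟨mulOp F G (elt F G (rename Sum.inl r)),
        Algebra.subset_adjoin (Or.inl (Or.inl ⟨_, rfl⟩)), fun x => ?_⟩
      show elt F G (rename Sum.inl r) * φ k l f₀ g₀ x = φ k l f₀ g₀ (elt f₀ 1 r * x)
      calc elt F G (rename Sum.inl r) * φ k l f₀ g₀ x
          = φ k l f₀ g₀ (elt f₀ 1 r) * φ k l f₀ g₀ x := by rw [φ_elt]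
        _ = φ k l f₀ g₀ (elt f₀ 1 r * x) := (map_mul _ _ _).symm
    · rw [Set.mem_singleton_iff] at hδ
      subst hδ
      refine ⟨mulOp F G (sElt F G),
        Algebra.subset_adjoin (Or.inl (Or.inr rfl)), fun x => ?_⟩
      show sElt F G * φ k l f₀ g₀ x = φ k l f₀ g₀ (sElt f₀ 1 * x)
      calc sElt F G * φ k l f₀ g₀ x
          = φ k l f₀ g₀ (sElt f₀ 1) * φ k l f₀ g₀ x := by rw [φ_s]
        _ = φ k l f₀ g₀ (sElt f₀ 1 * x) := (map_mul _ _ _).symm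
    · obtain ⟨d, rfl⟩ := hδ
      refine ⟨twist F G α (extDer k l d),
        Algebra.subset_adjoin (Or.inr ⟨_, rfl⟩), fun x => ?_⟩
      have hc : φ k l f₀ g₀ (sElt f₀ 1 * elt f₀ 1 (d f₀) * fInv f₀ 1 -
            (sElt f₀ 1 + algebraMap ℂ (Md f₀ (1 : MvPolynomial (Fin k) ℂ)) 0)
              * elt f₀ 1 (d (1 : MvPolynomial (Fin k) ℂ)) * gInv f₀ 1)
          = sElt F G * elt F G (rename Sum.inl (d f₀)) * fInv F G := by
        rw [Derivation.map_one_eq_zero]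
        rw [show elt f₀ (1 : MvPolynomial (Fin k) ℂ) (0 : MvPolynomial (Fin k) ℂ) = 0 by
          simp [elt]]
        rw [mul_zero, zero_mul, sub_zero]
        simp only [map_mul, φ_s, φ_elt]
        congr 1
        rw [show fInv f₀ (1 : MvPolynomial (Fin k) ℂ)
            = elt f₀ (1 : MvPolynomial (Fin k) ℂ) (1 : MvPolynomial (Fin k) ℂ)
              * fgInv f₀ (1 : MvPolynomial (Fin k) ℂ) from rfl]
        rw [show elt f₀ (1 : MvPolynomial (Fin k) ℂ) (1 : MvPolynomial (Fin k) ℂ) = 1 by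
          simp [elt], one_mul, φ_fgInv]
        rfl
      have hdg : elt F G (extDer k l d (MvPolynomial.rename Sum.inr g₀)) = 0 := by
        rw [extDer_rename_inr]; simp [elt]
      have hL : twist F G α (extDer k l d) (φ k l f₀ g₀ x) =
          extD F G (extDer k l d) (φ k l f₀ g₀ x) +
          (sElt F G * elt F G (rename Sum.inl (d f₀)) * fInv F G) * φ k l f₀ g₀ x := by
        simp only [twist, LinearMap.add_apply, Derivation.coeFn_coe, mulOp,
          LinearMap.mulLeft_apply, extDer_rename, hdg]
        rw [mul_zero, zero_mul, sub_zero]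
      have hR : φ k l f₀ g₀ (twist f₀ 1 (0 : ℂ) d x) =
          φ k l f₀ g₀ (extD f₀ 1 d x) +
          (sElt F G * elt F G (rename Sum.inl (d f₀)) * fInv F G) * φ k l f₀ g₀ x := by
        simp only [twist, LinearMap.add_apply, Derivation.coeFn_coe, mulOp,
          LinearMap.mulLeft_apply]
        simp only [map_add, map_mul, hc]
      rw [hL, hR, extD_comm]
  | algebraMap r =>
    refine ⟨algebraMap ℂ _ r, Subalgebra.algebraMap_mem _ r, fun x => ?_⟩
    rw [Module.algebraMap_end_apply, Module.algebraMap_end_apply, map_smul]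
  | add y z hy hz py pz =>
    obtain ⟨δ1, h1, p1⟩ := py
    obtain ⟨δ2, h2, p2⟩ := pz
    exact ⟨δ1 + δ2, add_mem h1 h2, fun x => by
      simp only [LinearMap.add_apply, p1, p2, map_add]⟩
  | mul y z hy hz py pz =>
    obtain ⟨δ1, h1, p1⟩ := py
    obtain ⟨δ2, h2, p2⟩ := pz
    exact ⟨δ1 * δ2, mul_mem h1 h2, fun x => by
      rw [Module.End.mul_apply, p2, p1, Module.End.mul_apply]⟩

end MeroBS

end Sep

end Aux


open MeroBS Polynomial

/-- **Separated variables: the meromorphic Bernstein–Sato polynomial divides the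
classical one.** Let `f` and `g` be polynomials in disjoint sets of variables
`x = (x₁,…,x_k)` and `y = (y₁,…,y_l)`.  If `b_f(s)` is a classical Bernstein–Sato
polynomial for `f` (witnessed by an operator `P(s,x,∂_x)` with
`P(s,x,∂_x) f^{s+1} = b_f(s) f^s`), then for every `α ≥ 0` the meromorphic
Bernstein–Sato polynomial `b^α_{f/g}(s)` divides `b_f(s)`. -/
theorem meromorphic_bernstein_sato_divides_classical_separated_variables
    (k l : ℕ) (f₀ : MvPolynomial (Fin k) ℂ) (g₀ : MvPolynomial (Fin l) ℂ)
    (hf₀ : f₀ ≠ 0) (hg₀ : g₀ ≠ 0)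
    (bf : Polynomial ℂ)
    (hbf : FunEq f₀ (1 : MvPolynomial (Fin k) ℂ) (0 : ℂ) bf)
    (α : ℝ) (hα : 0 ≤ α) :
    ∀ b : Polynomial ℂ,
      IsBernsteinSato (MvPolynomial.rename (Sum.inl : Fin k → Fin k ⊕ Fin l) f₀)
        (MvPolynomial.rename (Sum.inr : Fin l → Fin k ⊕ Fin l) g₀) (α : ℂ) b →
      b ∣ bf := by
  intro b hb
  refine IsBernsteinSato.dvd _ _ _ hb ?_
  obtain ⟨δ₀, hδ₀, he⟩ := hbf
  obtain ⟨δ, hδ, hc⟩ := dops_lift k l f₀ g₀ (α : ℂ) hδ₀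
  refine ⟨δ, hδ, ?_⟩
  have h1 : elt (MvPolynomial.rename (Sum.inl : Fin k → Fin k ⊕ Fin l) f₀)
      (MvPolynomial.rename (Sum.inr : Fin l → Fin k ⊕ Fin l) g₀)
      (MvPolynomial.rename (Sum.inl : Fin k → Fin k ⊕ Fin l) f₀)
      = φ k l f₀ g₀ (elt f₀ 1 f₀) := (φ_elt k l f₀ g₀ f₀).symm
  rw [h1, hc, he, ← Polynomial.aeval_algHom_apply, φ_s]
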